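/- The logic QBDi3 equals QDN3 plus the potential omniscience schema ¬¬(A ∨ ∼A); in particular, in each of these systems the equivalence ¬∼A ↔ ¬¬A is derivable, which makes the two falsity-of-implication axioms ∼(A→B)↔(¬∼A∧∼B) and ∼(A→B)↔(¬¬A∧∼B) interderivable. -/
import Mathlib


inductive Fm : Type where
  | atom : Nat → Fm
  | bot : Fm
  | snot : Fm → Fm
  | and : Fm → Fm → Fm
  | or : Fm → Fm → Fm
  | imp : Fm → Fm → Fm
deriving DecidableEq

/-- Intuitionistic/Boolean negation `¬A := A → ⊥`. -/
def negFm (A : Fm) : Fm := Fm.imp A Fm.bot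

/-- Biconditional `A ↔ B := (A→B) ∧ (B→A)`. -/
def iffFm (A B : Fm) : Fm := Fm.and (Fm.imp A B) (Fm.imp B A)

/-- Hilbert-style derivability: intuitionistic positive axioms Ax1, Ax2, Ax4–Ax10,
modus ponens, plus extra axioms from `Ax`. -/
inductive Deriv (Ax : Fm → Prop) : Fm → Prop where
  | extra {A} : Ax A → Deriv Ax A
  | ax1 (A B) : Deriv Ax (Fm.imp A (Fm.imp B A))
  | ax2 (A B C) : Deriv Ax (Fm.imp (Fm.imp A (Fm.imp B C)) (Fm.imp (Fm.imp A B) (Fm.imp A C)))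
  | ax4 (A B) : Deriv Ax (Fm.imp (Fm.and A B) A)
  | ax5 (A B) : Deriv Ax (Fm.imp (Fm.and A B) B)
  | ax6 (A B C) : Deriv Ax (Fm.imp (Fm.imp C A) (Fm.imp (Fm.imp C B) (Fm.imp C (Fm.and A B))))
  | ax7 (A B) : Deriv Ax (Fm.imp A (Fm.or A B))
  | ax8 (A B) : Deriv Ax (Fm.imp B (Fm.or A B))
  | ax9 (A B C) : Deriv Ax (Fm.imp (Fm.imp A C) (Fm.imp (Fm.imp B C) (Fm.imp (Fm.or A B) C)))
  | ax10 (A) : Deriv Ax (Fm.imp Fm.bot A)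
  | mp {A B} : Deriv Ax (Fm.imp A B) → Deriv Ax A → Deriv Ax B

/-- The characteristic axioms of (propositional) BDi3. -/
inductive BDi3Ax : Fm → Prop where
  | toSnotBot (A) : BDi3Ax (Fm.imp A (Fm.snot Fm.bot))
  | dne (A) : BDi3Ax (iffFm (Fm.snot (Fm.snot A)) A)
  | dmAnd (A B) : BDi3Ax (iffFm (Fm.snot (Fm.and A B)) (Fm.or (Fm.snot A) (Fm.snot B)))
  | dmOr (A B) : BDi3Ax (iffFm (Fm.snot (Fm.or A B)) (Fm.and (Fm.snot A) (Fm.snot B)))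
  | dmImp (A B) : BDi3Ax (iffFm (Fm.snot (Fm.imp A B)) (Fm.and (negFm (Fm.snot A)) (Fm.snot B)))
  | i2 (A) : BDi3Ax (Fm.imp (Fm.snot A) (negFm A))
  | i3 (A) : BDi3Ax (negFm (negFm (Fm.or A (Fm.snot A))))

/-- The characteristic axioms of (propositional) DN3: like BDi3 but with the
implication de Morgan axiom `∼(A→B) ↔ (¬¬A ∧ ∼B)`, keeping `∼A → ¬A`, and
without potential omniscience. -/
inductive DN3Ax : Fm → Prop where
  | toSnotBot (A) : DN3Ax (Fm.imp A (Fm.snot Fm.bot))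
  | dne (A) : DN3Ax (iffFm (Fm.snot (Fm.snot A)) A)
  | dmAnd (A B) : DN3Ax (iffFm (Fm.snot (Fm.and A B)) (Fm.or (Fm.snot A) (Fm.snot B)))
  | dmOr (A B) : DN3Ax (iffFm (Fm.snot (Fm.or A B)) (Fm.and (Fm.snot A) (Fm.snot B)))
  | dmImp (A B) : DN3Ax (iffFm (Fm.snot (Fm.imp A B)) (Fm.and (negFm (negFm A)) (Fm.snot B)))
  | i2 (A) : DN3Ax (Fm.imp (Fm.snot A) (negFm A))

/-- DN3 plus the potential omniscience schema ¬¬(A ∨ ∼A). -/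
inductive DN3POAx : Fm → Prop where
  | dn3 {A} : DN3Ax A → DN3POAx A
  | i3 (A) : DN3POAx (negFm (negFm (Fm.or A (Fm.snot A))))

namespace Hilbert

open Fm

theorem derivMono {Ax Ax' : Fm → Prop} (h : ∀ A, Ax A → Ax' A) {A}
    (d : Deriv Ax A) : Deriv Ax' A := by
  induction d with
  | extra ha => exact .extra (h _ ha)
  | ax1 A B => exact .ax1 A B
  | ax2 A B C => exact .ax2 A B C
  | ax4 A B => exact .ax4 A B
  | ax5 A B => exact .ax5 A B
  | ax6 A B C => exact .ax6 A B C
  | ax7 A B => exact .ax7 A B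
  | ax8 A B => exact .ax8 A B
  | ax9 A B C => exact .ax9 A B C
  | ax10 A => exact .ax10 A
  | mp _ _ ih1 ih2 => exact .mp ih1 ih2

variable {Ax : Fm → Prop}

theorem idd (A : Fm) : Deriv Ax (Fm.imp A A) :=
  ((Deriv.ax2 A (Fm.imp A A) A).mp (.ax1 _ _)).mp (.ax1 _ _)

/-- extend the axiom set with one hypothesis -/
def addHyp (Ax : Fm → Prop) (H : Fm) : Fm → Prop := fun A => Ax A ∨ A = H

theorem hyp (H : Fm) : Deriv (addHyp Ax H) H := .extra (Or.inr rfl)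

theorem weaken {A H : Fm} (d : Deriv Ax A) : Deriv (addHyp Ax H) A :=
  derivMono (fun _ h => Or.inl h) d

theorem deduction {H B : Fm} (d : Deriv (addHyp Ax H) B) : Deriv Ax (Fm.imp H B) := by
  induction d with
  | extra ha =>
    rcases ha with h | rfl
    · exact (Deriv.ax1 _ _).mp (.extra h)
    · exact idd _
  | mp _ _ ih1 ih2 => exact ((Deriv.ax2 _ _ _).mp ih1).mp ih2
  | ax1 A B => exact (Deriv.ax1 _ _).mp (.ax1 A B)
  | ax2 A B C => exact (Deriv.ax1 _ _).mp (.ax2 A B C)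
  | ax4 A B => exact (Deriv.ax1 _ _).mp (.ax4 A B)
  | ax5 A B => exact (Deriv.ax1 _ _).mp (.ax5 A B)
  | ax6 A B C => exact (Deriv.ax1 _ _).mp (.ax6 A B C)
  | ax7 A B => exact (Deriv.ax1 _ _).mp (.ax7 A B)
  | ax8 A B => exact (Deriv.ax1 _ _).mp (.ax8 A B)
  | ax9 A B C => exact (Deriv.ax1 _ _).mp (.ax9 A B C)
  | ax10 A => exact (Deriv.ax1 _ _).mp (.ax10 A)

theorem andIntro {A B : Fm} (hA : Deriv Ax A) (hB : Deriv Ax B) :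
    Deriv Ax (Fm.and A B) :=
  ((((Deriv.ax6 A B B).mp ((Deriv.ax1 A B).mp hA)).mp (idd B)).mp hB)

theorem iffIntro {A B : Fm} (h1 : Deriv Ax (Fm.imp A B)) (h2 : Deriv Ax (Fm.imp B A)) :
    Deriv Ax (iffFm A B) := andIntro h1 h2

theorem iffMp {A B : Fm} (h : Deriv Ax (iffFm A B)) : Deriv Ax (Fm.imp A B) :=
  (Deriv.ax4 _ _).mp h

theorem iffMpr {A B : Fm} (h : Deriv Ax (iffFm A B)) : Deriv Ax (Fm.imp B A) :=
  (Deriv.ax5 _ _).mp h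

theorem impTrans {A B C : Fm} (h1 : Deriv Ax (Fm.imp A B)) (h2 : Deriv Ax (Fm.imp B C)) :
    Deriv Ax (Fm.imp A C) :=
  deduction ((weaken h2).mp ((weaken h1).mp (hyp A)))

theorem iffTrans {A B C : Fm} (h1 : Deriv Ax (iffFm A B)) (h2 : Deriv Ax (iffFm B C)) :
    Deriv Ax (iffFm A C) :=
  iffIntro (impTrans (iffMp h1) (iffMp h2)) (impTrans (iffMpr h2) (iffMpr h1))

theorem iffSymm {A B : Fm} (h : Deriv Ax (iffFm A B)) : Deriv Ax (iffFm B A) :=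
  iffIntro (iffMpr h) (iffMp h)

/-- congruence in the first conjunct -/
theorem andCongrLeft {X Y C : Fm} (h : Deriv Ax (iffFm X Y)) :
    Deriv Ax (iffFm (Fm.and X C) (Fm.and Y C)) := by
  apply iffIntro
  · apply deduction
    exact andIntro ((weaken (iffMp h)).mp ((Deriv.ax4 _ _).mp (hyp _)))
      ((Deriv.ax5 _ _).mp (hyp _))
  · apply deduction
    exact andIntro ((weaken (iffMpr h)).mp ((Deriv.ax4 _ _).mp (hyp _)))
      ((Deriv.ax5 _ _).mp (hyp _))

/-- The key equivalence `¬∼A ↔ ¬¬A`, from `∼A → ¬A` and `¬¬(A ∨ ∼A)`. -/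
theorem keyIff (i2 : ∀ A, Deriv Ax (Fm.imp (Fm.snot A) (negFm A)))
    (i3 : ∀ A, Deriv Ax (negFm (negFm (Fm.or A (Fm.snot A))))) (A : Fm) :
    Deriv Ax (iffFm (negFm (Fm.snot A)) (negFm (negFm A))) := by
  apply iffIntro
  · -- ¬∼A → ¬¬A
    apply deduction; apply deduction
    -- hyps: h1 : ¬∼A, h2 : ¬A ; goal ⊥
    have h1 : Deriv (addHyp (addHyp Ax (negFm (Fm.snot A))) (negFm A)) (negFm (Fm.snot A)) :=
      weaken (hyp _)
    have h2 : Deriv (addHyp (addHyp Ax (negFm (Fm.snot A))) (negFm A)) (negFm A) := hyp _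
    have horb : Deriv (addHyp (addHyp Ax (negFm (Fm.snot A))) (negFm A))
        (negFm (Fm.or A (Fm.snot A))) :=
      ((Deriv.ax9 A (Fm.snot A) Fm.bot).mp h2).mp h1
    exact (weaken (weaken (i3 A))).mp horb
  · -- ¬¬A → ¬∼A
    apply deduction; apply deduction
    have h1 : Deriv (addHyp (addHyp Ax (negFm (negFm A))) (Fm.snot A)) (negFm (negFm A)) :=
      weaken (hyp _)
    have h2 : Deriv (addHyp (addHyp Ax (negFm (negFm A))) (Fm.snot A)) (Fm.snot A) := hyp _
    exact h1.mp ((weaken (weaken (i2 A))).mp h2)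

end Hilbert

open Hilbert

theorem dn3_of_dn3ax {A : Fm} (h : DN3Ax A) : Deriv DN3POAx A := .extra (.dn3 h)

/-- key iff in DN3PO -/
theorem keyDN3 (A : Fm) :
    Deriv DN3POAx (iffFm (negFm (Fm.snot A)) (negFm (negFm A))) :=
  keyIff (fun A => dn3_of_dn3ax (.i2 A)) (fun A => .extra (.i3 A)) A

/-- key iff in BDi3 -/
theorem keyBDi3 (A : Fm) :
    Deriv BDi3Ax (iffFm (negFm (Fm.snot A)) (negFm (negFm A))) :=
  keyIff (fun A => .extra (.i2 A)) (fun A => .extra (.i3 A)) A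

/-- the DN3-style dmImp in BDi3 -/
theorem dmImpDN_in_BDi3 (A B : Fm) :
    Deriv BDi3Ax (iffFm (Fm.snot (Fm.imp A B)) (Fm.and (negFm (negFm A)) (Fm.snot B))) :=
  iffTrans (.extra (.dmImp A B)) (andCongrLeft (keyBDi3 A))

/-- the BDi3-style dmImp in DN3PO -/
theorem dmImpB_in_DN3 (A B : Fm) :
    Deriv DN3POAx (iffFm (Fm.snot (Fm.imp A B)) (Fm.and (negFm (Fm.snot A)) (Fm.snot B))) :=
  iffTrans (dn3_of_dn3ax (.dmImp A B)) (andCongrLeft (iffSymm (keyDN3 A)))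

theorem bdi3_to_dn3po {A : Fm} (d : Deriv BDi3Ax A) : Deriv DN3POAx A := by
  induction d with
  | extra ha =>
    cases ha with
    | toSnotBot A => exact dn3_of_dn3ax (.toSnotBot A)
    | dne A => exact dn3_of_dn3ax (.dne A)
    | dmAnd A B => exact dn3_of_dn3ax (.dmAnd A B)
    | dmOr A B => exact dn3_of_dn3ax (.dmOr A B)
    | dmImp A B => exact dmImpB_in_DN3 A B
    | i2 A => exact dn3_of_dn3ax (.i2 A)
    | i3 A => exact .extra (.i3 A)
  | ax1 A B => exact .ax1 A B
  | ax2 A B C => exact .ax2 A B C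
  | ax4 A B => exact .ax4 A B
  | ax5 A B => exact .ax5 A B
  | ax6 A B C => exact .ax6 A B C
  | ax7 A B => exact .ax7 A B
  | ax8 A B => exact .ax8 A B
  | ax9 A B C => exact .ax9 A B C
  | ax10 A => exact .ax10 A
  | mp _ _ ih1 ih2 => exact .mp ih1 ih2

theorem dn3po_to_bdi3 {A : Fm} (d : Deriv DN3POAx A) : Deriv BDi3Ax A := by
  induction d with
  | extra ha =>
    cases ha with
    | dn3 h =>
      cases h with
      | toSnotBot A => exact .extra (.toSnotBot A)
      | dne A => exact .extra (.dne A)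
      | dmAnd A B => exact .extra (.dmAnd A B)
      | dmOr A B => exact .extra (.dmOr A B)
      | dmImp A B => exact dmImpDN_in_BDi3 A B
      | i2 A => exact .extra (.i2 A)
    | i3 A => exact .extra (.i3 A)
  | ax1 A B => exact .ax1 A B
  | ax2 A B C => exact .ax2 A B C
  | ax4 A B => exact .ax4 A B
  | ax5 A B => exact .ax5 A B
  | ax6 A B C => exact .ax6 A B C
  | ax7 A B => exact .ax7 A B
  | ax8 A B => exact .ax8 A B
  | ax9 A B C => exact .ax9 A B C
  | ax10 A => exact .ax10 A
  | mp _ _ ih1 ih2 => exact .mp ih1 ih2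

/-- Proposition 24: BDi3 = DN3 + ¬¬(A∨∼A); in each system `¬∼A ↔ ¬¬A` is
derivable, whence the two falsity-of-implication axioms are interderivable. -/
theorem bdi3_eq_dn3_plus_po :
    (∀ A : Fm, Deriv BDi3Ax A ↔ Deriv DN3POAx A) ∧
    (∀ A : Fm, Deriv BDi3Ax (iffFm (negFm (Fm.snot A)) (negFm (negFm A)))) ∧
    (∀ A : Fm, Deriv DN3POAx (iffFm (negFm (Fm.snot A)) (negFm (negFm A)))) ∧
    (∀ A B : Fm, Deriv BDi3Ax
      (iffFm (Fm.snot (Fm.imp A B)) (Fm.and (negFm (negFm A)) (Fm.snot B)))) ∧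
    (∀ A B : Fm, Deriv DN3POAx
      (iffFm (Fm.snot (Fm.imp A B)) (Fm.and (negFm (Fm.snot A)) (Fm.snot B)))) := by
  exact ⟨fun A => ⟨bdi3_to_dn3po, dn3po_to_bdi3⟩, keyBDi3, keyDN3, dmImpDN_in_BDi3, dmImpB_in_DN3⟩
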